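/- Let κ be a positive integer and c an integer with 2 ≤ c ≤ κ+1. Then for every real z, lim_{a→1} (a-1)^{κ+1-c} m_κ^{1/a, 2-c}(z) = (-1)^{κ+1-c} C(z, c-1), where C(z, c-1) = z(z-1)···(z-c+2)/(c-1)!. -/

import Mathlib

open Filter Topology Finset

/-- Generalized binomial coefficient C(y, k) = y(y-1)⋯(y-k+1)/k!. -/
noncomputable def gbinom (y : ℝ) (k : ℕ) : ℝ :=
  (∏ i ∈ Finset.range k, (y - i)) / (Nat.factorial k)

/-- Pochhammer symbol (y)_k = y(y+1)⋯(y+k-1). -/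
noncomputable def poch (y : ℝ) (k : ℕ) : ℝ :=
  ∏ i ∈ Finset.range k, (y + i)

/-- Meixner polynomial m_n^{a,c}(x). -/
noncomputable def meixner (n : ℕ) (a c x : ℝ) : ℝ :=
  (a ^ n / (1 - a) ^ n) *
    ∑ j ∈ Finset.range (n + 1), (a⁻¹) ^ j * gbinom x j * gbinom (-x - c) (n - j)

/-!
Substituting `1/a`, the Meixner polynomial becomes `(a - 1)^(-κ) ∑ⱼ aʲ C(z, j) C(c - 2 - z, κ - j)`.
Expanding `aʲ = ((a - 1) + 1)ʲ` and applying trinomial revision and Chu–Vandermonde rewrites the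
sum as its Taylor expansion `∑ₘ (a - 1)ᵐ C(z, m) C(c - 2 - m, κ - m)` at `a = 1`. For `m < c - 1`
the upper entry `c - 2 - m` is a natural number below `κ - m`, so those terms vanish, and after
multiplying by `(a - 1)^(κ + 1 - c)` what is left is a polynomial in `a - 1` with constant term
`C(z, c - 1) C(-1, κ + 1 - c) = (-1)^(κ + 1 - c) C(z, c - 1)`.
-/

namespace Ring

variable {R : Type*} [CommRing R] [BinomialRing R]

theorem sum_Ico_choose_smul_choose_mul_choose (x y : R) {m n : ℕ} (hmn : m ≤ n) :
    ∑ j ∈ Ico m (n + 1), j.choose m • (choose x j * choose y (n - j)) =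
      choose x m * choose (x - m + y) (n - m) := by
  rw [sum_Ico_eq_sum_range, add_choose_eq _ (Commute.all _ _),
    Nat.sum_antidiagonal_eq_sum_range_succ_mk, mul_sum, Nat.sub_add_comm hmn]
  refine sum_congr rfl fun i _ => ?_
  rw [← smul_mul_assoc, choose_smul_choose x (Nat.le_add_right m i), Nat.add_sub_cancel_left,
    Nat.sub_add_eq, mul_assoc]

theorem sum_range_pow_mul_choose_mul_choose (a x y : R) (n : ℕ) :
    ∑ j ∈ range (n + 1), a ^ j * (choose x j * choose y (n - j)) =
      ∑ m ∈ range (n + 1), (a - 1) ^ m * (choose x m * choose (x + y - m) (n - m)) := by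
  have hpow (j : ℕ) : a ^ j = ∑ m ∈ range (j + 1), (a - 1) ^ m * j.choose m := by
    simpa using add_pow (a - 1) 1 j
  calc ∑ j ∈ range (n + 1), a ^ j * (choose x j * choose y (n - j))
      = ∑ j ∈ range (n + 1), ∑ m ∈ range (j + 1),
          (a - 1) ^ m * j.choose m • (choose x j * choose y (n - j)) := by
        simp only [hpow, sum_mul, nsmul_eq_mul, mul_assoc]
    _ = ∑ m ∈ range (n + 1), ∑ j ∈ Ico m (n + 1),
          (a - 1) ^ m * j.choose m • (choose x j * choose y (n - j)) :=
        sum_comm' fun j m => by simp only [mem_range, mem_Ico]; omega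
    _ = ∑ m ∈ range (n + 1), (a - 1) ^ m * (choose x m * choose (x + y - m) (n - m)) := by
        refine sum_congr rfl fun m hm => ?_
        rw [← mul_sum, sum_Ico_choose_smul_choose_mul_choose x y
          (Nat.lt_succ_iff.mp (mem_range.mp hm)), sub_add_eq_add_sub]

end Ring

theorem gbinom_eq_choose (y : ℝ) (k : ℕ) : gbinom y k = Ring.choose y k := by
  rw [gbinom, Ring.choose_eq_smul, ← Polynomial.aeval_eq_smeval, ← Polynomial.eval_map_algebraMap,
    descPochhammer_map, descPochhammer_eval_eq_prod_range, smul_eq_mul, div_eq_inv_mul]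

theorem gbinom_natCast_of_lt {n k : ℕ} (h : n < k) : gbinom (n : ℝ) k = 0 := by
  rw [gbinom_eq_choose, Ring.choose_natCast, Nat.choose_eq_zero_of_lt h, Nat.cast_zero]

theorem gbinom_neg_one (n : ℕ) : gbinom (-1) n = (-1) ^ n := by
  rw [gbinom_eq_choose, Ring.choose_neg, add_sub_cancel_left, Ring.choose_natCast,
    Nat.choose_self, Nat.cast_one, Units.smul_def, zsmul_eq_mul, Int.cast_negOnePow, mul_one,
    zpow_natCast]

theorem meixner_inv_eq {a : ℝ} (ha : a ≠ 0) (n : ℕ) (c x : ℝ) :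
    meixner n a⁻¹ c x = ((a - 1) ^ n)⁻¹ *
      ∑ m ∈ range (n + 1), (a - 1) ^ m * (gbinom x m * gbinom (-c - m) (n - m)) := by
  have hprefactor : a⁻¹ ^ n / (1 - a⁻¹) ^ n = ((a - 1) ^ n)⁻¹ := by
    rw [← div_pow, ← inv_pow, inv_eq_one_div (a - 1), ← mul_div_mul_left _ _ ha,
      mul_inv_cancel₀ ha, mul_sub, mul_one, mul_inv_cancel₀ ha]
  simp only [meixner, hprefactor, inv_inv, gbinom_eq_choose, mul_assoc]
  rw [Ring.sum_range_pow_mul_choose_mul_choose]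
  congr 3 with m
  ring_nf

theorem tendsto_mul_inv_sum_range_pow {T : ℕ → ℝ} {k n : ℕ} (hkn : k ≤ n)
    (hT : ∀ m < k, T m = 0) :
    Tendsto (fun t : ℝ => t ^ (n - k) * ((t ^ n)⁻¹ * ∑ m ∈ range (n + 1), t ^ m * T m))
      (𝓝[≠] 0) (𝓝 (T k)) := by
  obtain ⟨d, rfl⟩ := Nat.exists_eq_add_of_le hkn
  set P : ℝ → ℝ := fun t => ∑ i ∈ range (d + 1), t ^ i * T (k + i)
  have hP : Tendsto P (𝓝[≠] 0) (𝓝 (T k)) := by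
    have hP0 : P 0 = T k := by simp [P, sum_range_succ']
    exact hP0 ▸ (continuous_finsetSum _ fun i _ => by fun_prop).continuousAt.tendsto.mono_left
      nhdsWithin_le_nhds
  refine hP.congr' (eventually_nhdsWithin_of_forall fun t (ht : t ≠ 0) => ?_)
  have hsplit : ∑ m ∈ range (k + d + 1), t ^ m * T m = t ^ k * P t := by
    rw [add_assoc, sum_range_add, sum_eq_zero fun m hm => by rw [hT m (mem_range.1 hm), mul_zero],
      zero_add, mul_sum]
    exact sum_congr rfl fun i _ => by rw [pow_add, mul_assoc]
  show _ = _ * (_ * _)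
  rw [eq_comm, hsplit, Nat.add_sub_cancel_left, pow_add]
  field_simp

theorem stmt7_general (κ : ℕ) (c : ℕ) (hc2 : 2 ≤ c) (hcκ : c ≤ κ + 1) (z : ℝ) :
    Tendsto (fun a : ℝ => (a - 1) ^ (κ + 1 - c) * meixner κ a⁻¹ (2 - (c : ℝ)) z)
      (𝓝[({0, 1} : Set ℝ)ᶜ] (1 : ℝ)) (𝓝 ((-1) ^ (κ + 1 - c) * gbinom z (c - 1))) := by
  set T : ℕ → ℝ := fun m => gbinom z m * gbinom (-(2 - (c : ℝ)) - m) (κ - m)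
  have hT : ∀ m < c - 1, T m = 0 := fun m hm => by
    have hupper : -(2 - (c : ℝ)) - m = ((c - 2 - m : ℕ) : ℝ) := by
      rw [Nat.cast_sub (by omega), Nat.cast_sub hc2]; push_cast; ring
    simp only [T, hupper, gbinom_natCast_of_lt (show c - 2 - m < κ - m by omega), mul_zero]
  have hTc : T (c - 1) = (-1) ^ (κ + 1 - c) * gbinom z (c - 1) := by
    have hupper : -(2 - (c : ℝ)) - (c - 1 : ℕ) = -1 := by
      rw [Nat.cast_sub (by omega)]; push_cast; ring
    simp only [T, hupper, gbinom_neg_one, show κ - (c - 1) = κ + 1 - c by omega, mul_comm]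
  have hshift : Tendsto (fun a : ℝ => a - 1) (𝓝[({0, 1} : Set ℝ)ᶜ] 1) (𝓝[≠] 0) :=
    tendsto_nhdsWithin_of_tendsto_nhds_of_eventually_within _
      (by simpa using ((continuous_sub_right (1 : ℝ)).tendsto 1).mono_left nhdsWithin_le_nhds)
      (eventually_nhdsWithin_of_forall fun a ha => by simp_all [sub_eq_zero])
  rw [← hTc, show κ + 1 - c = κ - (c - 1) by omega]
  refine ((tendsto_mul_inv_sum_range_pow (show c - 1 ≤ κ by omega) hT).comp hshift).congr'
    (eventually_nhdsWithin_of_forall fun a ha => ?_)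
  dsimp only [Function.comp_apply]
  rw [meixner_inv_eq (by simp_all)]

theorem stmt7 (κ : ℕ) (hκ : 0 < κ) (c : ℕ) (hc2 : 2 ≤ c) (hcκ : c ≤ κ + 1) (z : ℝ) :
    Tendsto (fun a : ℝ => (a - 1) ^ (κ + 1 - c) * meixner κ a⁻¹ (2 - (c : ℝ)) z)
      (𝓝[({0, 1} : Set ℝ)ᶜ] (1 : ℝ)) (𝓝 ((-1) ^ (κ + 1 - c) * gbinom z (c - 1))) :=
  stmt7_general κ c hc2 hcκ z
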